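/- arXiv:2407.00080 — 3 statements merged into one kernel-verified Lean document; each statement's English description precedes it below -/
import Mathlib

section
/- For every R ≥ 0 and every f ≥ 0, the magnitude of the derivative of f ↦ Q(R,f) is bounded: |∂Q(R,f)/∂f| ≤ L, where L = (1/(√(2π)·σ_s·Z)) · m·d_max·F·B·R·(c·B·R + F) / (ρ·ν·F)². -/
open Real MeasureTheory Set

noncomputable def xfun (B F c ρ ν dmax : ℝ) (m : ℕ) (R f : ℝ) : ℝ :=
  dmax * F * B * R / (m * f * (c * B * R + F) + ρ * ν * F)

/-- CDF of the normal distribution N(μs, σs²). -/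
noncomputable def normCDF (μs σs : ℝ) (y : ℝ) : ℝ :=
  ∫ t in Set.Iic y, (1 / (Real.sqrt (2 * Real.pi) * σs)) * Real.exp (-(t - μs) ^ 2 / (2 * σs ^ 2))

noncomputable def Qfun (B F c ρ ν dmax : ℝ) (m : ℕ) (μs σs sa sb : ℝ) (R f : ℝ) : ℝ :=
  (normCDF μs σs (xfun B F c ρ ν dmax m R f) - normCDF μs σs sa) /
    (normCDF μs σs sb - normCDF μs σs sa)

/-! With `x(f) = A / (K f + D)`, where `A, K ≥ 0` and `D > 0`, the chain rule gives
`∂Q/∂f = φ(x(f)) · (-A K / (K f + D)²) / Z` for the Gaussian density `φ`.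
The bound follows from `φ ≤ 1 / (√(2π) σ)` and `K f + D ≥ D`. -/

open ProbabilityTheory NNReal

section IntegralIic

variable {g : ℝ → ℝ}

theorem hasDerivAt_integral_Iic (hg : Integrable g) (hgc : Continuous g) (y : ℝ) :
    HasDerivAt (fun z => ∫ t in Iic z, g t) (g y) y := by
  have hsplit : ∀ z, ∫ t in Iic z, g t = (∫ t in (0 : ℝ)..z, g t) + ∫ t in Iic 0, g t :=
    fun z => by
      rw [← intervalIntegral.integral_Iic_sub_Iic hg.integrableOn hg.integrableOn, sub_add_cancel]
  have hFTC : HasDerivAt (fun z => ∫ t in (0 : ℝ)..z, g t) (g y) y :=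
    intervalIntegral.integral_hasDerivAt_right hg.intervalIntegrable
      hgc.aestronglyMeasurable.stronglyMeasurableAtFilter hgc.continuousAt
  exact (hFTC.add_const _).congr_of_eventuallyEq (.of_forall hsplit)

theorem integral_Iic_sub_integral_Iic_pos (hg : Integrable g) (hpos : ∀ t, 0 < g t) {a b : ℝ}
    (hab : a < b) : 0 < (∫ t in Iic b, g t) - ∫ t in Iic a, g t := by
  rw [intervalIntegral.integral_Iic_sub_Iic hg.integrableOn hg.integrableOn]
  exact intervalIntegral.intervalIntegral_pos_of_pos hg.intervalIntegrable hpos hab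

end IntegralIic

theorem continuous_gaussianPDFReal (μ : ℝ) (v : ℝ≥0) :
    Continuous (gaussianPDFReal μ v) := by
  rw [gaussianPDFReal_def]
  fun_prop

theorem gaussianPDFReal_le (μ : ℝ) (v : ℝ≥0) (x : ℝ) :
    gaussianPDFReal μ v x ≤ (√(2 * π * v))⁻¹ := by
  rw [gaussianPDFReal]
  refine mul_le_of_le_one_right (by positivity) (exp_le_one_iff.mpr ?_)
  exact div_nonpos_of_nonpos_of_nonneg (neg_nonpos.mpr (sq_nonneg _)) (by positivity)

theorem inv_sqrt_two_pi_mul_sq {σ : ℝ} (hσ : 0 ≤ σ) :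
    (√(2 * π * (σ ^ 2).toNNReal))⁻¹ = 1 / (√(2 * π) * σ) := by
  rw [Real.coe_toNNReal _ (sq_nonneg σ), sqrt_mul (by positivity), sqrt_sq hσ, one_div]

theorem normCDF_eq_integral_gaussianPDFReal (μ : ℝ) {σ : ℝ} (hσ : 0 ≤ σ) (y : ℝ) :
    normCDF μ σ y = ∫ t in Iic y, gaussianPDFReal μ (σ ^ 2).toNNReal t := by
  simp_rw [normCDF, gaussianPDFReal, inv_sqrt_two_pi_mul_sq hσ,
    Real.coe_toNNReal _ (sq_nonneg σ)]

theorem hasDerivAt_normCDF (μ : ℝ) {σ : ℝ} (hσ : 0 ≤ σ) (y : ℝ) :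
    HasDerivAt (normCDF μ σ) (gaussianPDFReal μ (σ ^ 2).toNNReal y) y := by
  simp_rw [funext (normCDF_eq_integral_gaussianPDFReal μ hσ)]
  exact hasDerivAt_integral_Iic (integrable_gaussianPDFReal μ _)
    (continuous_gaussianPDFReal μ _) y

theorem normCDF_sub_normCDF_pos (μ : ℝ) {σ : ℝ} (hσ : 0 < σ) {a b : ℝ} (hab : a < b) :
    0 < normCDF μ σ b - normCDF μ σ a := by
  simp only [normCDF_eq_integral_gaussianPDFReal μ hσ.le]
  exact integral_Iic_sub_integral_Iic_pos (integrable_gaussianPDFReal μ _)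
    (fun t => gaussianPDFReal_pos μ _ t (by positivity)) hab

theorem abs_deriv_comp_div_affine_le {Φ φ : ℝ → ℝ} {M A K D f : ℝ}
    (hΦ : ∀ y, HasDerivAt Φ (φ y) y) (hφ : ∀ y, |φ y| ≤ M)
    (hA : 0 ≤ A) (hK : 0 ≤ K) (hD : 0 < D) (hf : 0 ≤ f) :
    |deriv (fun f => Φ (A / (K * f + D))) f| ≤ M * (A * K / D ^ 2) := by
  have hDle : D ≤ K * f + D := le_add_of_nonneg_left (mul_nonneg hK hf)
  have hinner : HasDerivAt (fun f => A / (K * f + D)) (-(A * K) / (K * f + D) ^ 2) f := by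
    have hlin : HasDerivAt (fun f => K * f + D) K f := by
      simpa using ((hasDerivAt_id f).const_mul K).add_const D
    have h : HasDerivAt (fun f => A / (K * f + D))
        ((0 * (K * f + D) - A * K) / (K * f + D) ^ 2) f :=
      (hasDerivAt_const f A).div hlin (by linarith)
    rwa [zero_mul, zero_sub] at h
  have hinner_le : |-(A * K) / (K * f + D) ^ 2| ≤ A * K / D ^ 2 := by
    rw [abs_div, abs_neg, abs_of_nonneg (mul_nonneg hA hK), abs_of_pos (by nlinarith)]
    gcongr
  have hcomp : HasDerivAt (fun f => Φ (A / (K * f + D)))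
      (φ (A / (K * f + D)) * (-(A * K) / (K * f + D) ^ 2)) f := (hΦ _).comp f hinner
  rw [hcomp.deriv, abs_mul]
  exact mul_le_mul (hφ _) hinner_le (abs_nonneg _) ((abs_nonneg _).trans (hφ 0))

theorem stmt3_general (B F c ρ ν dmax : ℝ) (m : ℕ)
    (hB : 0 < B) (hF : 0 < F) (hc : 0 < c) (hρ : 0 < ρ) (hν : 0 < ν) (hd : 0 < dmax)
    (μs σs sa sb : ℝ) (hσ : 0 < σs) (hab : sa < sb)
    (R f : ℝ) (hR : 0 ≤ R) (hf : 0 ≤ f) :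
    |deriv (fun f' => Qfun B F c ρ ν dmax m μs σs sa sb R f') f| ≤
      (1 / (Real.sqrt (2 * Real.pi) * σs * (normCDF μs σs sb - normCDF μs σs sa))) *
        (m * dmax * F * B * R * (c * B * R + F) / (ρ * ν * F) ^ 2) := by
  have hQ : (fun f' => Qfun B F c ρ ν dmax m μs σs sa sb R f') = fun f' =>
      (normCDF μs σs (dmax * F * B * R / (m * (c * B * R + F) * f' + ρ * ν * F))
        - normCDF μs σs sa) / (normCDF μs σs sb - normCDF μs σs sa) := by
    funext f'
    simp only [Qfun, xfun, mul_right_comm _ f']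
  set Z := normCDF μs σs sb - normCDF μs σs sa
  have hZ : 0 < Z := normCDF_sub_normCDF_pos μs hσ hab
  have hdensity :
      ∀ y, |gaussianPDFReal μs (σs ^ 2).toNNReal y| ≤ 1 / (√(2 * π) * σs) := by
    intro y
    rw [abs_of_nonneg (gaussianPDFReal_nonneg _ _ _), ← inv_sqrt_two_pi_mul_sq hσ.le]
    exact gaussianPDFReal_le _ _ _
  have hderiv := abs_deriv_comp_div_affine_le (hasDerivAt_normCDF μs hσ.le) hdensity
    (by positivity : 0 ≤ dmax * F * B * R) (by positivity : 0 ≤ (m : ℝ) * (c * B * R + F))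
    (by positivity : 0 < ρ * ν * F) hf
  rw [hQ, deriv_div_const, deriv_sub_const, abs_div, abs_of_pos hZ]
  calc _ ≤ 1 / (√(2 * π) * σs) *
          (dmax * F * B * R * (m * (c * B * R + F)) / (ρ * ν * F) ^ 2) / Z :=
        div_le_div_of_nonneg_right hderiv hZ.le
    _ = _ := by field_simp

theorem stmt3 (B F c ρ ν dmax : ℝ) (m : ℕ)
    (hB : 0 < B) (hF : 0 < F) (hc : 0 < c) (hρ : 0 < ρ) (hν : 0 < ν) (hd : 0 < dmax)
    (hm : 0 < m) (μs σs sa sb : ℝ) (hσ : 0 < σs) (hsa : 0 < sa) (hab : sa < sb)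
    (R f : ℝ) (hR : 0 ≤ R) (hf : 0 ≤ f) :
    |deriv (fun f' => Qfun B F c ρ ν dmax m μs σs sa sb R f') f| ≤
      (1 / (Real.sqrt (2 * Real.pi) * σs * (normCDF μs σs sb - normCDF μs σs sa))) *
        (m * dmax * F * B * R * (c * B * R + F) / (ρ * ν * F) ^ 2) :=
  stmt3_general B F c ρ ν dmax m hB hF hc hρ hν hd μs σs sa sb hσ hab R f hR hf
end

section
/- For every R ≥ 0, the function f ↦ Q(R,f) is Lipschitz continuous on [0,1] with Lipschitz constant L = (1/(√(2π)·σ_s·Z)) · m·d_max·F·B·R·(c·B·R + F) / (ρ·ν·F)²; that is, for all f, f' ∈ [0,1], |Q(R,f) − Q(R,f')| ≤ L·|f − f'|. -/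
open Real MeasureTheory Set

/-
Q(R, ·) is the composite of three maps: f ↦ x(R, f), the normal CDF Φ', and an affine map
with slope 1/Z. The first is a Möbius map a/(b f + e) with a, b ≥ 0 and e > 0, whose slope on
f ≥ 0 is at most a b / e²; Φ' is Lipschitz with constant the maximum 1/(√(2π) σ_s) of the
normal density; and Z ≥ 0 because Φ' is monotone. Multiplying the three constants gives L.
-/

section IntegralIic

variable {g : ℝ → ℝ}

lemma abs_setIntegral_Iic_sub_le (hg : Integrable g) {C : ℝ} (hC : ∀ t, |g t| ≤ C) (y z : ℝ) :
    |(∫ t in Iic z, g t) - ∫ t in Iic y, g t| ≤ C * |z - y| := by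
  rw [intervalIntegral.integral_Iic_sub_Iic hg.integrableOn hg.integrableOn]
  simpa only [Real.norm_eq_abs] using
    intervalIntegral.norm_integral_le_of_norm_le_const fun t _ =>
      (Real.norm_eq_abs (g t)).trans_le (hC t)

lemma monotone_setIntegral_Iic (hg : Integrable g) (hg₀ : 0 ≤ g) :
    Monotone fun y => ∫ t in Iic y, g t := by
  intro y z hyz
  rw [← sub_nonneg, intervalIntegral.integral_Iic_sub_Iic hg.integrableOn hg.integrableOn]
  exact intervalIntegral.integral_nonneg hyz fun t _ => hg₀ t

end IntegralIic

noncomputable def normPDF (μs σs t : ℝ) : ℝ :=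
  (1 / (Real.sqrt (2 * Real.pi) * σs)) * Real.exp (-(t - μs) ^ 2 / (2 * σs ^ 2))

section Normal

variable {μs σs : ℝ}

lemma integrable_normPDF (hσ : 0 < σs) : Integrable (normPDF μs σs) := by
  have h := (integrable_exp_neg_mul_sq (by positivity : 0 < 1 / (2 * σs ^ 2))).comp_sub_right μs
  refine (h.const_mul (1 / (Real.sqrt (2 * Real.pi) * σs))).congr (ae_of_all _ fun t => ?_)
  simp only [normPDF]
  ring_nf

lemma normPDF_nonneg (hσ : 0 ≤ σs) (t : ℝ) : 0 ≤ normPDF μs σs t := by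
  unfold normPDF
  positivity

lemma abs_normPDF_le (hσ : 0 ≤ σs) (t : ℝ) :
    |normPDF μs σs t| ≤ 1 / (Real.sqrt (2 * Real.pi) * σs) := by
  rw [abs_of_nonneg (normPDF_nonneg hσ t), normPDF]
  have hexp : Real.exp (-(t - μs) ^ 2 / (2 * σs ^ 2)) ≤ 1 := by
    rw [Real.exp_le_one_iff, neg_div, neg_nonpos]
    positivity
  exact mul_le_of_le_one_right (by positivity) hexp

lemma monotone_normCDF (hσ : 0 < σs) : Monotone (normCDF μs σs) :=
  monotone_setIntegral_Iic (integrable_normPDF hσ) (normPDF_nonneg hσ.le)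

lemma abs_normCDF_sub_le (hσ : 0 < σs) (y z : ℝ) :
    |normCDF μs σs z - normCDF μs σs y| ≤ 1 / (Real.sqrt (2 * Real.pi) * σs) * |z - y| :=
  abs_setIntegral_Iic_sub_le (integrable_normPDF (μs := μs) hσ) (abs_normPDF_le hσ.le) y z

end Normal

lemma abs_div_mul_add_sub_div_mul_add_le {a b e f f' : ℝ} (ha : 0 ≤ a) (hb : 0 ≤ b) (he : 0 < e)
    (hf : 0 ≤ f) (hf' : 0 ≤ f') :
    |a / (b * f + e) - a / (b * f' + e)| ≤ a * b / e ^ 2 * |f - f'| := by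
  have hbf : 0 ≤ b * f := mul_nonneg hb hf
  have hbf' : 0 ≤ b * f' := mul_nonneg hb hf'
  have hden : e ^ 2 ≤ (b * f + e) * (b * f' + e) := by nlinarith [mul_nonneg hbf hbf']
  have hdiff : a / (b * f + e) - a / (b * f' + e) =
      a * b * (f' - f) / ((b * f + e) * (b * f' + e)) := by
    field_simp
    ring
  rw [hdiff, abs_div, abs_mul, abs_of_nonneg (mul_nonneg ha hb), abs_sub_comm,
    abs_of_pos (by positivity : 0 < (b * f + e) * (b * f' + e)), mul_div_right_comm]
  gcongr

lemma xfun_eq (B F c ρ ν dmax : ℝ) (m : ℕ) (R f : ℝ) :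
    xfun B F c ρ ν dmax m R f = dmax * F * B * R / (m * (c * B * R + F) * f + ρ * ν * F) := by
  rw [xfun, mul_right_comm (m : ℝ)]

lemma Qfun_sub_Qfun (B F c ρ ν dmax : ℝ) (m : ℕ) (μs σs sa sb R f f' : ℝ) :
    Qfun B F c ρ ν dmax m μs σs sa sb R f - Qfun B F c ρ ν dmax m μs σs sa sb R f' =
      (normCDF μs σs (xfun B F c ρ ν dmax m R f) - normCDF μs σs (xfun B F c ρ ν dmax m R f')) /
        (normCDF μs σs sb - normCDF μs σs sa) := by
  rw [Qfun, Qfun, ← sub_div, sub_sub_sub_cancel_right]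

theorem stmt4_general (B F c ρ ν dmax : ℝ) (m : ℕ)
    (hB : 0 < B) (hF : 0 < F) (hc : 0 < c) (hρ : 0 < ρ) (hν : 0 < ν) (hd : 0 < dmax)
    (μs σs sa sb : ℝ) (hσ : 0 < σs) (hab : sa < sb)
    (R : ℝ) (hR : 0 ≤ R) :
    ∀ f ∈ Set.Icc (0 : ℝ) 1, ∀ f' ∈ Set.Icc (0 : ℝ) 1,
      |Qfun B F c ρ ν dmax m μs σs sa sb R f - Qfun B F c ρ ν dmax m μs σs sa sb R f'| ≤
        (1 / (Real.sqrt (2 * Real.pi) * σs * (normCDF μs σs sb - normCDF μs σs sa))) *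
          (m * dmax * F * B * R * (c * B * R + F) / (ρ * ν * F) ^ 2) * |f - f'| := by
  intro f hf f' hf'
  set x := xfun B F c ρ ν dmax m R
  set Z := normCDF μs σs sb - normCDF μs σs sa
  have hZ : 0 ≤ Z := sub_nonneg.2 (monotone_normCDF hσ hab.le)
  have hx : |x f - x f'| ≤
      dmax * F * B * R * (m * (c * B * R + F)) / (ρ * ν * F) ^ 2 * |f - f'| := by
    simp only [x, xfun_eq]
    exact abs_div_mul_add_sub_div_mul_add_le (by positivity) (by positivity) (by positivity)
      hf.1 hf'.1
  calc |Qfun B F c ρ ν dmax m μs σs sa sb R f - Qfun B F c ρ ν dmax m μs σs sa sb R f'|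
      = |normCDF μs σs (x f) - normCDF μs σs (x f')| / Z := by
        rw [Qfun_sub_Qfun, abs_div, abs_of_nonneg hZ]
    _ ≤ 1 / (Real.sqrt (2 * Real.pi) * σs) *
          (dmax * F * B * R * (m * (c * B * R + F)) / (ρ * ν * F) ^ 2 * |f - f'|) / Z := by
        gcongr
        exact (abs_normCDF_sub_le hσ _ _).trans (by gcongr)
    _ = _ := by ring_nf

theorem stmt4 (B F c ρ ν dmax : ℝ) (m : ℕ)
    (hB : 0 < B) (hF : 0 < F) (hc : 0 < c) (hρ : 0 < ρ) (hν : 0 < ν) (hd : 0 < dmax)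
    (hm : 0 < m) (μs σs sa sb : ℝ) (hσ : 0 < σs) (hsa : 0 < sa) (hab : sa < sb)
    (R : ℝ) (hR : 0 ≤ R) :
    ∀ f ∈ Set.Icc (0 : ℝ) 1, ∀ f' ∈ Set.Icc (0 : ℝ) 1,
      |Qfun B F c ρ ν dmax m μs σs sa sb R f - Qfun B F c ρ ν dmax m μs σs sa sb R f'| ≤
        (1 / (Real.sqrt (2 * Real.pi) * σs * (normCDF μs σs sb - normCDF μs σs sa))) *
          (m * dmax * F * B * R * (c * B * R + F) / (ρ * ν * F) ^ 2) * |f - f'| :=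
  stmt4_general B F c ρ ν dmax m hB hF hc hρ hν hd μs σs sa sb hσ hab R hR
end

section
/- For every R ≥ 0, the clamped success probability f ↦ Q̃(R,f) is monotone nonincreasing on [0,∞). -/
open Real MeasureTheory Set

/-- The clamped success probability. -/
noncomputable def Qtilde (B F c ρ ν dmax : ℝ) (m : ℕ) (μs σs sa sb : ℝ) (R f : ℝ) : ℝ :=
  max 0 (min 1 (Qfun B F c ρ ν dmax m μs σs sa sb R f))

open ProbabilityTheory in
theorem normCDF_eq_cdf_gaussianReal {μs σs : ℝ} (hσ : 0 < σs) :
    normCDF μs σs = cdf (gaussianReal μs (σs ^ 2).toNNReal) := by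
  have hv : (σs ^ 2).toNNReal ≠ 0 := by simp [hσ.ne']
  ext y
  rw [cdf_eq_real, measureReal_def, gaussianReal_apply_eq_integral _ hv,
    ENNReal.toReal_ofReal (setIntegral_nonneg measurableSet_Iic
      fun t _ => gaussianPDFReal_nonneg _ _ t)]
  refine setIntegral_congr_fun measurableSet_Iic fun t _ => ?_
  rw [gaussianPDFReal_def, Real.coe_toNNReal _ (sq_nonneg σs), Real.sqrt_mul' _ (sq_nonneg σs),
    Real.sqrt_sq hσ.le, one_div]

theorem normCDF_monotone {μs σs : ℝ} (hσ : 0 < σs) : Monotone (normCDF μs σs) := by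
  rw [normCDF_eq_cdf_gaussianReal hσ]
  exact (ProbabilityTheory.cdf _).mono

theorem xfun_antitoneOn {B F c ρ ν dmax : ℝ} (m : ℕ) (hB : 0 < B) (hF : 0 < F) (hc : 0 < c)
    (hρ : 0 < ρ) (hν : 0 < ν) (hd : 0 < dmax) {R : ℝ} (hR : 0 ≤ R) :
    AntitoneOn (xfun B F c ρ ν dmax m R) (Ici 0) := by
  intro f₁ hf₁ f₂ _ hf
  have hk : 0 ≤ c * B * R + F := by positivity
  have hf₁ : (0 : ℝ) ≤ f₁ := hf₁
  unfold xfun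
  gcongr

theorem Qfun_antitoneOn {B F c ρ ν dmax : ℝ} (m : ℕ) (hB : 0 < B) (hF : 0 < F) (hc : 0 < c)
    (hρ : 0 < ρ) (hν : 0 < ν) (hd : 0 < dmax) {μs σs sa sb : ℝ} (hσ : 0 < σs) (hab : sa ≤ sb)
    {R : ℝ} (hR : 0 ≤ R) :
    AntitoneOn (Qfun B F c ρ ν dmax m μs σs sa sb R) (Ici 0) := by
  intro f₁ hf₁ f₂ hf₂ hf
  have hZ : 0 ≤ normCDF μs σs sb - normCDF μs σs sa := sub_nonneg.2 (normCDF_monotone hσ hab)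
  unfold Qfun
  gcongr
  exact normCDF_monotone hσ (xfun_antitoneOn m hB hF hc hρ hν hd hR hf₁ hf₂ hf)

theorem stmt8_general (B F c ρ ν dmax : ℝ) (m : ℕ)
    (hB : 0 < B) (hF : 0 < F) (hc : 0 < c) (hρ : 0 < ρ) (hν : 0 < ν) (hd : 0 < dmax)
    (μs σs sa sb : ℝ) (hσ : 0 < σs) (hab : sa < sb)
    (R : ℝ) (hR : 0 ≤ R) :
    AntitoneOn (fun f => Qtilde B F c ρ ν dmax m μs σs sa sb R f) (Set.Ici 0) :=
  (monotone_const.max (monotone_const.min monotone_id)).comp_antitoneOn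
    (Qfun_antitoneOn m hB hF hc hρ hν hd hσ hab.le hR)

theorem stmt8 (B F c ρ ν dmax : ℝ) (m : ℕ)
    (hB : 0 < B) (hF : 0 < F) (hc : 0 < c) (hρ : 0 < ρ) (hν : 0 < ν) (hd : 0 < dmax)
    (hm : 0 < m) (μs σs sa sb : ℝ) (hσ : 0 < σs) (hsa : 0 < sa) (hab : sa < sb)
    (R : ℝ) (hR : 0 ≤ R) :
    AntitoneOn (fun f => Qtilde B F c ρ ν dmax m μs σs sa sb R f) (Set.Ici 0) :=
  stmt8_general B F c ρ ν dmax m hB hF hc hρ hν hd μs σs sa sb hσ hab R hR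
end
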